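/- Let M be a matroid on a finite ground set E, let μ : E → ℕ with A := supp(μ) such that x^μ ∉ J(M), and let ℓ ≥ 1. Then SF_ℓ(J(M) : x^μ) = SF_ℓ(J(M)) : x^μ; equivalently, since J(M) : x^μ = J(M ⧹ A), one has SF_ℓ(J(M ⧹ A)) = SF_ℓ(J(M)) : x^μ. -/

import Mathlib

open Matroid MvPolynomial

/-- The squarefree monomial `x_S = ∏_{i ∈ S} x_i`. -/
noncomputable def xS {α : Type*} [Fintype α] (K : Type*) [Field K] (S : Set α) :
    MvPolynomial α K :=
  ∏ i ∈ S.toFinite.toFinset, MvPolynomial.X i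

/-- The monomial `x^γ = ∏ i, x_i ^ γ(i)`. -/
noncomputable def xPow {α : Type*} [Fintype α] (K : Type*) [Field K] (γ : α → ℕ) :
    MvPolynomial α K :=
  ∏ i : α, (MvPolynomial.X i : MvPolynomial α K) ^ γ i

/-- `p_S`: the ideal of `K[x_i : i ∈ α]` generated by the variables `x_i`, `i ∈ S`. -/
noncomputable def pS {α : Type*} (K : Type*) [Field K] (S : Set α) :
    Ideal (MvPolynomial α K) :=
  Ideal.span (MvPolynomial.X '' S)

/-- The cover ideal `J(M) = ⋂_{F basis of M} p_F` of a matroid `M`. -/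
noncomputable def coverIdeal {α : Type*} [Fintype α] (K : Type*) [Field K] (M : Matroid α) :
    Ideal (MvPolynomial α K) :=
  ⨅ F ∈ {F : Set α | M.IsBase F}, pS K F

/-- The `ℓ`-th symbolic power `J(M)^{(ℓ)} = ⋂_{F basis of M} p_F^ℓ` of the cover ideal. -/
noncomputable def symbPow {α : Type*} [Fintype α] (K : Type*) [Field K] (M : Matroid α)
    (ℓ : ℕ) : Ideal (MvPolynomial α K) :=
  ⨅ F ∈ {F : Set α | M.IsBase F}, (pS K F) ^ ℓ

/-- `SF_ℓ(J(M))`: the ideal generated by the squarefree monomials of `J(M)^{(ℓ)}`, i.e. by the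
monomials `x_S` with `|S ∩ F| ≥ ℓ` for every basis `F` of `M`. -/
noncomputable def SF {α : Type*} [Fintype α] (K : Type*) [Field K] (M : Matroid α)
    (ℓ : ℕ) : Ideal (MvPolynomial α K) :=
  Ideal.span {m : MvPolynomial α K |
    ∃ S : Set α, m = xS K S ∧ ∀ F : Set α, M.IsBase F → ℓ ≤ (S ∩ F).ncard}

/-- Matroid deletion: `M ⧹ D` is the restriction of `M` to `M.E \ D`. -/
def mdel {α : Type*} (M : Matroid α) (D : Set α) : Matroid α := M ↾ (M.E \ D)

/-- Matroid contraction: `M ⧸ C = (M✶ ⧹ C)✶`. -/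
def mcon {α : Type*} (M : Matroid α) (C : Set α) : Matroid α := (mdel M✶ C)✶

/-- A cocircuit of `M`: a minimal subset of the ground set meeting every basis of `M`. -/
def IsCocircuit {α : Type*} (M : Matroid α) (C : Set α) : Prop :=
  C ⊆ M.E ∧ (∀ F, M.IsBase F → (C ∩ F).Nonempty) ∧
    ∀ C' : Set α, C' ⊂ C → ∃ F, M.IsBase F ∧ C' ∩ F = ∅

/-!
Membership in an ideal spanned by squarefree monomials `x_S`, with `S` ranging over an upward
closed family, is decided on the supports of the monomials of a polynomial. Multiplying by `x^μ`
adds `A = supp μ` to every support, so the theorem reduces to a statement about sets: `S` meets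
every base of `M ⧹ A` in at least `ℓ` elements iff `S ∪ A` meets every base of `M` so. Since
`x^μ ∉ J(M)`, some base `B₀` avoids `A`, and then the bases of `M ⧹ A` are the bases of `M`
avoiding `A`; this gives one direction. For the other, extend `F \ A` inside `(F \ A) ∪ B₀` to a
base `F'` avoiding `A`: it has only `|F ∩ A|` elements outside `F \ A`, so
`|S ∩ F'| ≤ |(S ∪ A) ∩ F|`.
-/

section Monomials

variable {α : Type*} [Fintype α] {K : Type*} [Field K]

lemma xS_eq_monomial (S : Set α) :
    xS K S = monomial (Finsupp.indicator S.toFinite.toFinset fun _ _ ↦ 1) 1 := by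
  rw [xS]
  simpa only [pow_one] using prod_X_pow (R := K) (fun _ ↦ 1) S.toFinite.toFinset

lemma xPow_eq_monomial (μ : α → ℕ) :
    xPow K μ = monomial (Finsupp.equivFunOnFinite.symm μ) 1 := by
  rw [xPow, prod_X_pow]
  congr
  ext i
  exact Finsupp.indicator_of_mem (Finset.mem_univ i) _

lemma indicator_one_le_iff (S : Set α) (d : α →₀ ℕ) :
    Finsupp.indicator S.toFinite.toFinset (fun _ _ ↦ 1) ≤ d ↔ S ⊆ d.support := by
  refine ⟨fun h i hi ↦ ?_, fun h i ↦ ?_⟩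
  · have := h i
    rw [Finsupp.indicator_of_mem (S.toFinite.mem_toFinset.mpr hi)] at this
    exact Finsupp.mem_support_iff.mpr (Nat.one_le_iff_ne_zero.mp this)
  · by_cases hi : i ∈ S
    · rw [Finsupp.indicator_of_mem (S.toFinite.mem_toFinset.mpr hi)]
      exact Nat.one_le_iff_ne_zero.mpr (Finsupp.mem_support_iff.mp (h hi))
    · rw [Finsupp.indicator_of_notMem (mt S.toFinite.mem_toFinset.mp hi)]
      exact Nat.zero_le _

/-- Upward closure of `𝒮` turns "some generator divides `x^d`" into a condition on `supp d`. -/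
lemma mem_span_xS_iff {𝒮 : Set (Set α)} (h𝒮 : IsUpperSet 𝒮) {f : MvPolynomial α K} :
    f ∈ Ideal.span {m | ∃ S, m = xS K S ∧ S ∈ 𝒮} ↔ ∀ d ∈ f.support, (↑d.support : Set α) ∈ 𝒮 := by
  have hgen : {m | ∃ S, m = xS K S ∧ S ∈ 𝒮} = (fun s ↦ monomial s (1 : K)) ''
      ((fun S : Set α ↦ Finsupp.indicator S.toFinite.toFinset fun _ _ ↦ 1) '' 𝒮) := by
    ext m
    simp only [Set.mem_ofPred_eq, Set.image_image, Set.mem_image, xS_eq_monomial]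
    exact ⟨fun ⟨S, hm, hS⟩ ↦ ⟨S, hS, hm.symm⟩, fun ⟨S, hS, hm⟩ ↦ ⟨S, hm.symm, hS⟩⟩
  rw [hgen, mem_ideal_span_monomial_image]
  refine forall₂_congr fun d _ ↦ ⟨?_, fun hd ↦ ⟨_, ⟨_, hd, rfl⟩, ?_⟩⟩
  · rintro ⟨_, ⟨S, hS, rfl⟩, hle⟩
    exact h𝒮 ((indicator_one_le_iff S d).mp hle) hS
  · exact (indicator_one_le_iff _ d).mpr subset_rfl

lemma mem_SF_iff {M : Matroid α} {ℓ : ℕ} {f : MvPolynomial α K} :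
    f ∈ SF K M ℓ ↔ ∀ d ∈ f.support, ∀ F, M.IsBase F → ℓ ≤ ((↑d.support : Set α) ∩ F).ncard :=
  mem_span_xS_iff fun _ _ hST hS F hF ↦
    (hS F hF).trans (Set.ncard_le_ncard (Set.inter_subset_inter_left F hST))

lemma exists_isBase_disjoint_support_of_xPow_notMem {M : Matroid α} {μ : α → ℕ}
    (h : xPow K μ ∉ coverIdeal K M) :
    ∃ B, M.IsBase B ∧ Disjoint B (Function.support μ) := by
  simp only [coverIdeal, Ideal.mem_iInf, Set.mem_ofPred_eq, not_forall] at h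
  obtain ⟨B, hB, hμB⟩ := h
  refine ⟨B, hB, Set.disjoint_left.mpr fun i hiB hiμ ↦ hμB ?_⟩
  rw [pS, mem_ideal_span_X_image, xPow_eq_monomial]
  intro m hm
  rw [Finset.mem_singleton.mp (support_monomial_subset hm)]
  exact ⟨i, hiB, hiμ⟩

end Monomials

lemma MvPolynomial.support_mul_monomial_one {σ R : Type*} [CommSemiring R]
    (p : MvPolynomial σ R) (s : σ →₀ ℕ) :
    (p * monomial s 1).support = p.support.map (addRightEmbedding s) :=
  AddMonoidAlgebra.support_coeff_mul_single p _ (by simp) _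

namespace Matroid

variable {α : Type*} {M : Matroid α} {A B₀ F S : Set α} {ℓ : ℕ}

lemma isBase_delete_iff_of_isBase_disjoint (hB₀ : M.IsBase B₀) (hB₀A : Disjoint B₀ A) :
    (M ＼ A).IsBase F ↔ M.IsBase F ∧ Disjoint F A := by
  rw [delete_isBase_iff]
  refine ⟨fun h ↦ ⟨h.isBase_of_isBase_subset hB₀ ?_, (Set.subset_sdiff.mp h.subset).2⟩,
    fun ⟨hF, hFA⟩ ↦ hF.isBasis_of_subset Set.sdiff_subset ?_⟩
  · exact Set.subset_sdiff.mpr ⟨hB₀.subset_ground, hB₀A⟩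
  · exact Set.subset_sdiff.mpr ⟨hF.subset_ground, hFA⟩

lemma le_ncard_union_inter_of_forall_isBase_delete [M.RankFinite]
    (hB₀ : M.IsBase B₀) (hB₀A : Disjoint B₀ A)
    (hS : ∀ F', (M ＼ A).IsBase F' → ℓ ≤ (S ∩ F').ncard) (hF : M.IsBase F) :
    ℓ ≤ ((S ∪ A) ∩ F).ncard := by
  obtain ⟨F', hF', hFAF', hF'FB₀⟩ :=
    (hF.indep.subset (Set.sdiff_subset : F \ A ⊆ F)).exists_isBase_subset_union_isBase hB₀
  have hF'A : Disjoint F' A := Set.disjoint_of_subset_left hF'FB₀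
    (Set.disjoint_union_left.mpr ⟨Set.disjoint_sdiff_left, hB₀A⟩)
  have hgain : (F' \ (F \ A)).ncard = (F ∩ A).ncard := by
    have h₁ := Set.ncard_sdiff_add_ncard_of_subset hFAF' hF'.finite
    have h₂ := Set.ncard_inter_add_ncard_sdiff_eq_ncard F A hF.finite
    have h₃ := hF'.ncard_eq_ncard_of_isBase hF
    omega
  have hsplit : (S ∪ A) ∩ F = (S ∩ (F \ A)) ∪ (F ∩ A) := by
    ext x; simp only [Set.mem_inter_iff, Set.mem_union, Set.mem_sdiff]; tauto
  have hdisj : Disjoint (S ∩ (F \ A)) (F ∩ A) :=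
    Set.disjoint_left.mpr fun _ hx hx' ↦ hx.2.2 hx'.2
  calc ℓ ≤ (S ∩ F').ncard := hS F' ((isBase_delete_iff_of_isBase_disjoint hB₀ hB₀A).mpr ⟨hF', hF'A⟩)
    _ ≤ ((S ∩ (F \ A)) ∪ (F' \ (F \ A))).ncard :=
        Set.ncard_le_ncard (fun x ⟨hxS, hxF'⟩ ↦ by by_cases hx : x ∈ F \ A <;> simp [*])
          ((hF.finite.sdiff.inter_of_right S).union hF'.finite.sdiff)
    _ ≤ (S ∩ (F \ A)).ncard + (F' \ (F \ A)).ncard := Set.ncard_union_le _ _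
    _ = ((S ∪ A) ∩ F).ncard := by
        rw [hgain, hsplit, Set.ncard_union_eq hdisj (hF.finite.sdiff.inter_of_right S)
          (hF.finite.inter_of_left A)]

lemma forall_isBase_delete_le_ncard_iff [M.RankFinite] (hB₀ : M.IsBase B₀)
    (hB₀A : Disjoint B₀ A) :
    (∀ F, (M ＼ A).IsBase F → ℓ ≤ (S ∩ F).ncard) ↔
      ∀ F, M.IsBase F → ℓ ≤ ((S ∪ A) ∩ F).ncard := by
  refine ⟨fun hS F hF ↦ le_ncard_union_inter_of_forall_isBase_delete hB₀ hB₀A hS hF,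
    fun hSA F hF ↦ ?_⟩
  obtain ⟨hF, hFA⟩ := (isBase_delete_iff_of_isBase_disjoint hB₀ hB₀A).mp hF
  simpa [Set.union_inter_distrib_right, hFA.symm.inter_eq] using hSA F hF

end Matroid

theorem stmt13_general {α : Type*} [Fintype α] (K : Type*) [Field K]
    (M : Matroid α) (μ : α → ℕ)
    (hnotmem : xPow K μ ∉ coverIdeal K M) (ℓ : ℕ) :
    SF K (mdel M (Function.support μ)) ℓ =
      Submodule.colon (SF K M ℓ) (Ideal.span {xPow K μ}) := by
  classical
  obtain ⟨B₀, hB₀, hB₀μ⟩ := exists_isBase_disjoint_support_of_xPow_notMem hnotmem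
  set μ' := Finsupp.equivFunOnFinite.symm μ
  have hμ' : (↑μ'.support : Set α) = Function.support μ := by ext; simp [μ']
  ext f
  rw [Ideal.mem_colon_span_singleton, mem_SF_iff, mem_SF_iff, xPow_eq_monomial,
    support_mul_monomial_one, Finset.forall_mem_map]
  refine forall₂_congr fun d _ ↦ ?_
  rw [addRightEmbedding_apply, Finsupp.support_add_eq_union, Finset.coe_union, hμ']
  exact Matroid.forall_isBase_delete_le_ncard_iff hB₀ hB₀μ

/-- if `μ : E → ℕ` has support `A` and `x^μ ∉ J(M)`, then for every `ℓ ≥ 1`,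
`SF_ℓ(J(M) : x^μ) = SF_ℓ(J(M)) : x^μ`; since `J(M) : x^μ = J(M ⧹ A)`, this says
`SF_ℓ(J(M ⧹ A)) = SF_ℓ(J(M)) : x^μ`. -/
theorem stmt13 {α : Type*} [Fintype α] (K : Type*) [Field K]
    (M : Matroid α) (hE : M.E = Set.univ) (μ : α → ℕ)
    (hnotmem : xPow K μ ∉ coverIdeal K M) (ℓ : ℕ) (hℓ : 1 ≤ ℓ) :
    SF K (mdel M (Function.support μ)) ℓ =
      Submodule.colon (SF K M ℓ) (Ideal.span {xPow K μ}) :=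
  stmt13_general K M μ hnotmem ℓ
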